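/- arXiv:1412.0538 — 2 statements merged into one kernel-verified Lean document; each statement's English description precedes it below -/
import Mathlib

section
/- For any walk S from v_s in a finite connected weighted graph, at every stage of the agent-counting scan the invariant N + add = curr + Σ_{v visited so far} w_v holds, where the sum ranges over the distinct vertices visited up to that stage. -/
/-! Strategic deployment: common definitions.

A walk is scanned with a state consisting of the set of already-visited
vertices, the number `curr` of currently available (non-settled) agents, and
the number `add` of additional agents (beyond `N = ∑ v, wV v`) recruited so
far.  Crossing an edge `e` requires `curr ≥ wE e` (topping up `add`
otherwise); the first visit of a vertex `v` settles `wV v` agents there. -/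

namespace Deploy

structure St (V : Type*) (α : Type*) where
  visited : Finset V
  curr : α
  add : α

variable {V : Type*} [DecidableEq V] {α : Type*} [AddCommMonoid α] [LinearOrder α] [IsOrderedAddMonoid α] [Sub α]

/-- Scan step for crossing an edge `e`. -/
def crossEdge (wE : Sym2 V → α) (e : Sym2 V) (s : St V α) : St V α :=
  if s.curr < wE e then ⟨s.visited, wE e, s.add + (wE e - s.curr)⟩ else s

/-- Scan step for visiting a vertex `v` (only first visits have an effect). -/
def visitVtx (wV : V → α) (v : V) (s : St V α) : St V α :=
  if v ∈ s.visited then s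
  else if s.curr < wV v then ⟨insert v s.visited, 0, s.add + (wV v - s.curr)⟩
  else ⟨insert v s.visited, s.curr - wV v, s.add⟩

variable {G : SimpleGraph V}

/-- Scanning a walk: alternately cross the next edge and visit the next vertex. -/
def scanWalk (wE : Sym2 V → α) (wV : V → α) : {u t : V} → G.Walk u t → St V α → St V α
  | _, _, .nil, s => s
  | u, _, .cons (v := v) _ p, s => scanWalk wE wV p (visitVtx wV v (crossEdge wE s(u, v) s))

/-- The agent count of a walk `p` starting at `vs`: the scan starts with
`curr = N = ∑ v, wV v` and `add = 0`, first visiting the start vertex; the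
agent count is `N` plus the final value of `add`. -/
def agentCount [Fintype V] (wE : Sym2 V → α) (wV : V → α) {vs t : V} (p : G.Walk vs t) : α :=
  (∑ v, wV v) + (scanWalk wE wV p (visitVtx wV vs ⟨∅, ∑ v, wV v, 0⟩)).add

/-- A walk is covering if every vertex of the graph appears on it. -/
def IsCovering {vs t : V} (p : G.Walk vs t) : Prop := ∀ v : V, v ∈ p.support

end Deploy

/-! Crossing an edge raises `curr` and `add` by the same amount, and a first visit of `v` moves
`wV v` from `curr` into the visited weight, paying any deficit out of `add`. So every step
preserves `N + add = curr + ∑_{visited} wV`, which holds for the initial state. -/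

namespace Deploy

variable {V α : Type*} [DecidableEq V] [AddCommMonoid α] [LinearOrder α] [Sub α]
  {G : SimpleGraph V} (wE : Sym2 V → α) (wV : V → α) (s : St V α)

section Visited

omit [DecidableEq V] in
theorem visited_crossEdge (e : Sym2 V) : (crossEdge wE e s).visited = s.visited := by
  unfold Deploy.crossEdge
  split_ifs <;> rfl

theorem visited_visitVtx (v : V) : (visitVtx wV v s).visited = insert v s.visited := by
  unfold Deploy.visitVtx
  split_ifs with hv
  · exact (Finset.insert_eq_self.mpr hv).symm
  all_goals rfl

theorem visited_scanWalk {u t : V} (p : G.Walk u t) :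
    (scanWalk wE wV p s).visited = s.visited ∪ p.support.tail.toFinset := by
  induction p generalizing s with
  | nil => simp [Deploy.scanWalk]
  | cons _ p ih =>
    rw [Deploy.scanWalk, ih, visited_visitVtx, visited_crossEdge, SimpleGraph.Walk.support_cons,
      List.tail_cons, ← p.cons_tail_support, List.toFinset_cons, List.tail_cons,
      Finset.union_insert, Finset.insert_union]

end Visited

section Invariant

def ScanInvariant (N : α) (s : St V α) : Prop :=
  N + s.add = s.curr + ∑ v ∈ s.visited, wV v

variable [IsOrderedAddMonoid α] [OrderedSub α] [CanonicallyOrderedAdd α]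
  {wV s} {N : α}

omit [DecidableEq V] in
theorem ScanInvariant.add_add_tsub_curr (h : ScanInvariant wV N s) {a : α} (ha : s.curr ≤ a) :
    N + (s.add + (a - s.curr)) = a + ∑ v ∈ s.visited, wV v := by
  rw [← add_assoc, h, add_right_comm, add_comm s.curr, tsub_add_cancel_of_le ha]

omit [DecidableEq V] in
theorem ScanInvariant.crossEdge (h : ScanInvariant wV N s) (e : Sym2 V) :
    ScanInvariant wV N (crossEdge wE e s) := by
  unfold Deploy.crossEdge
  split_ifs with hlt
  · exact h.add_add_tsub_curr hlt.le
  · exact h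

theorem ScanInvariant.visitVtx (h : ScanInvariant wV N s) (v : V) :
    ScanInvariant wV N (visitVtx wV v s) := by
  unfold Deploy.visitVtx
  split_ifs with hv hlt
  · exact h
  · show N + (s.add + (wV v - s.curr)) = 0 + ∑ x ∈ insert v s.visited, wV x
    rw [Finset.sum_insert hv, zero_add, h.add_add_tsub_curr hlt.le]
  · show N + s.add = s.curr - wV v + ∑ x ∈ insert v s.visited, wV x
    rw [Finset.sum_insert hv, h, ← add_assoc, tsub_add_cancel_of_le (not_lt.mp hlt)]

theorem ScanInvariant.scanWalk {u t : V} (p : G.Walk u t) (h : ScanInvariant wV N s) :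
    ScanInvariant wV N (scanWalk wE wV p s) := by
  induction p generalizing s with
  | nil => exact h
  | cons _ _ ih => exact ih ((h.crossEdge wE _).visitVtx _)

end Invariant

end Deploy

theorem scan_invariant_general
    {V : Type*} [Fintype V] [DecidableEq V] (G : SimpleGraph V)
    (wE : Sym2 V → NNReal) (wV : V → NNReal) (vs : V)
    (t : V) (p : G.Walk vs t) :
    (∑ v, wV v) +
        (Deploy.scanWalk wE wV p (Deploy.visitVtx wV vs ⟨∅, ∑ v, wV v, 0⟩)).add =
      (Deploy.scanWalk wE wV p (Deploy.visitVtx wV vs ⟨∅, ∑ v, wV v, 0⟩)).curr +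
        ∑ v ∈ p.support.toFinset, wV v := by
  set s₀ : Deploy.St V NNReal := ⟨∅, ∑ v, wV v, 0⟩
  have hs₀ : Deploy.ScanInvariant wV (∑ v, wV v) s₀ := by simp [Deploy.ScanInvariant, s₀]
  have hvisited : (Deploy.scanWalk wE wV p (Deploy.visitVtx wV vs s₀)).visited =
      p.support.toFinset := by
    rw [Deploy.visited_scanWalk, Deploy.visited_visitVtx, ← p.cons_tail_support,
      List.toFinset_cons, List.tail_cons, Finset.insert_union, Finset.empty_union]
  rw [(hs₀.visitVtx vs).scanWalk wE p, hvisited]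

/-- at every stage of the agent-counting scan (equivalently, after
scanning any walk `S` from `v_s` — prefixes of walks are walks), the invariant
`N + add = curr + ∑_{v visited so far} w_v` holds, where the sum ranges over
the distinct vertices visited so far. -/
theorem scan_invariant
    {V : Type*} [Fintype V] [DecidableEq V] (G : SimpleGraph V) (hG : G.Connected)
    (wE : Sym2 V → NNReal) (wV : V → NNReal) (vs : V)
    (t : V) (p : G.Walk vs t) :
    (∑ v, wV v) +
        (Deploy.scanWalk wE wV p (Deploy.visitVtx wV vs ⟨∅, ∑ v, wV v, 0⟩)).add =
      (Deploy.scanWalk wE wV p (Deploy.visitVtx wV vs ⟨∅, ∑ v, wV v, 0⟩)).curr +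
        ∑ v ∈ p.support.toFinset, wV v :=
  scan_invariant_general G wE wV vs t p
end

section
/- For any walk S from v_s in a finite connected weighted graph, the agent count of S is at most N + w_max(S), where w_max(S) is the maximum weight of an edge traversed by S (and w_max(S) = 0 if S traverses no edge). Consequently, taking a depth-first-search closed walk of the graph, at most N + w_max agents are required in total, where w_max is the maximum edge weight of the graph. -/
/-! Throughout the scan the available agents are exactly the recruited ones plus the weights of
the vertices not yet visited (`St.Balanced`). Hence a first visit never recruits, and before a
top-up at an edge `e` we have `add ≤ curr`, so after raising `curr` to `wE e` we still have
`add ≤ wE e`. Thus `add` never exceeds the heaviest edge crossed so far. A closed walk through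
every vertex is obtained by concatenating round trips from the start vertex. -/

open Finset

namespace Deploy

variable {V α : Type*} [Fintype V] [DecidableEq V] [AddCommMonoid α]

def St.Balanced (wV : V → α) (s : St V α) : Prop :=
  s.curr = s.add + ∑ v ∈ s.visitedᶜ, wV v

variable [LinearOrder α] [CanonicallyOrderedAdd α] {wV : V → α} {s : St V α}

theorem St.Balanced.add_le_curr (hs : s.Balanced wV) : s.add ≤ s.curr :=
  hs ▸ le_self_add

variable [IsOrderedCancelAddMonoid α]

theorem St.Balanced.le_curr_of_notMem (hs : s.Balanced wV) {v : V} (hv : v ∉ s.visited) :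
    wV v ≤ s.curr :=
  hs ▸ (single_le_sum (fun _ _ => zero_le) (mem_compl.2 hv)).trans le_add_self

variable [Sub α]

theorem St.Balanced.visitVtx_eq_of_notMem (hs : s.Balanced wV) {v : V} (hv : v ∉ s.visited) :
    Deploy.visitVtx wV v s = ⟨insert v s.visited, s.curr - wV v, s.add⟩ := by
  simp [Deploy.visitVtx, hv, hs.le_curr_of_notMem hv]

theorem St.Balanced.add_visitVtx (hs : s.Balanced wV) (v : V) :
    (Deploy.visitVtx wV v s).add = s.add := by
  by_cases hv : v ∈ s.visited
  · simp [Deploy.visitVtx, hv]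
  · rw [hs.visitVtx_eq_of_notMem hv]

variable [OrderedSub α] {wE : Sym2 V → α} {G : SimpleGraph V}

theorem St.Balanced.visitVtx (hs : s.Balanced wV) (v : V) :
    (Deploy.visitVtx wV v s).Balanced wV := by
  by_cases hv : v ∈ s.visited
  · simpa [Deploy.visitVtx, hv] using hs
  rw [hs.visitVtx_eq_of_notMem hv]
  change s.curr - wV v = s.add + ∑ x ∈ (insert v s.visited)ᶜ, wV x
  rw [hs, compl_insert, ← add_sum_erase _ _ (mem_compl.2 hv), add_left_comm, add_tsub_cancel_left]

theorem St.Balanced.crossEdge (hs : s.Balanced wV) (e : Sym2 V) :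
    (Deploy.crossEdge wE e s).Balanced wV := by
  unfold Deploy.crossEdge
  split_ifs with h
  · change wE e = s.add + (wE e - s.curr) + ∑ v ∈ s.visitedᶜ, wV v
    rw [add_right_comm, ← hs, add_tsub_cancel_of_le h.le]
  · exact hs

theorem St.Balanced.add_crossEdge_le (hs : s.Balanced wV) (e : Sym2 V) :
    (Deploy.crossEdge wE e s).add ≤ max s.add (wE e) := by
  unfold Deploy.crossEdge
  split_ifs with h
  · calc s.add + (wE e - s.curr) ≤ s.curr + (wE e - s.curr) := by gcongr; exact hs.add_le_curr
      _ = wE e := add_tsub_cancel_of_le h.le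
      _ ≤ max s.add (wE e) := le_max_right _ _
  · exact le_max_left _ _

theorem St.Balanced.add_scanWalk_le {u t : V} (p : G.Walk u t) (hs : s.Balanced wV) :
    (Deploy.scanWalk wE wV p s).add ≤ max s.add ((p.edges.map wE).foldr max 0) := by
  induction p generalizing s with
  | nil => exact le_max_left _ _
  | @cons a b _ _ p ih =>
    calc (Deploy.scanWalk wE wV p (Deploy.visitVtx wV b (Deploy.crossEdge wE s(a, b) s))).add
        ≤ max (Deploy.crossEdge wE s(a, b) s).add ((p.edges.map wE).foldr max 0) := by
          simpa only [(hs.crossEdge _).add_visitVtx] using ih ((hs.crossEdge _).visitVtx b)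
      _ ≤ max (max s.add (wE s(a, b))) ((p.edges.map wE).foldr max 0) := by
          gcongr; exact hs.add_crossEdge_le _
      _ = max s.add (((SimpleGraph.Walk.cons _ p).edges.map wE).foldr max 0) := by
          simp only [SimpleGraph.Walk.edges_cons, List.map_cons, List.foldr_cons, max_assoc]

theorem agentCount_le_add_foldr_max {vs t : V} (p : G.Walk vs t) :
    agentCount wE wV p ≤ ∑ v, wV v + (p.edges.map wE).foldr max 0 := by
  have h₀ : (⟨∅, ∑ v, wV v, 0⟩ : St V α).Balanced wV := by simp [St.Balanced]
  unfold agentCount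
  gcongr
  calc _ ≤ max (visitVtx wV vs ⟨∅, ∑ v, wV v, 0⟩).add ((p.edges.map wE).foldr max 0) :=
        (h₀.visitVtx vs).add_scanWalk_le p
    _ = (p.edges.map wE).foldr max 0 := by
        rw [h₀.add_visitVtx, max_eq_right zero_le]

end Deploy

theorem SimpleGraph.Preconnected.exists_walk_support_superset {V : Type*} [DecidableEq V]
    {G : SimpleGraph V} (hG : G.Preconnected) (u : V) (T : Finset V) :
    ∃ p : G.Walk u u, ∀ v ∈ T, v ∈ p.support := by
  induction T using Finset.induction with
  | empty => exact ⟨.nil, by simp⟩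
  | @insert a T _ ih =>
    obtain ⟨p, hp⟩ := ih
    obtain ⟨q⟩ := hG u a
    refine ⟨(q.append q.reverse).append p, fun v hv => ?_⟩
    simp only [Walk.mem_support_append_iff]
    rcases mem_insert.1 hv with rfl | hv
    · exact .inl (.inl q.end_mem_support)
    · exact .inr (hp v hv)

open scoped Classical in
/-- the agent count of any walk `S` from `v_s` is at most
`N + w_max(S)`, where `w_max(S)` is the maximum weight of an edge traversed by
`S` (taken as `0` if `S` traverses no edge).  Consequently (taking a
depth-first-search closed walk of the connected graph `G`) there is a closed
covering walk whose agent count is at most `N + w_max`, where `w_max` is the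
maximum edge weight of `G`. -/
theorem agentCount_upper_bound
    {V : Type*} [Fintype V] [DecidableEq V] (G : SimpleGraph V) (hG : G.Connected)
    (wE : Sym2 V → NNReal) (wV : V → NNReal) (vs : V) :
    (∀ (t : V) (p : G.Walk vs t),
      Deploy.agentCount wE wV p ≤ (∑ v, wV v) + (p.edges.map wE).foldr max 0) ∧
    ∃ p : G.Walk vs vs, Deploy.IsCovering p ∧
      Deploy.agentCount wE wV p ≤ (∑ v, wV v) + G.edgeFinset.sup wE := by
  refine ⟨fun _ p => Deploy.agentCount_le_add_foldr_max p, ?_⟩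
  obtain ⟨p, hp⟩ := hG.preconnected.exists_walk_support_superset vs univ
  refine ⟨p, fun v => hp v (mem_univ v), (Deploy.agentCount_le_add_foldr_max p).trans ?_⟩
  gcongr
  refine List.max_le_of_forall_le _ _ fun x hx => ?_
  obtain ⟨e, he, rfl⟩ := List.mem_map.1 hx
  exact le_sup (G.mem_edgeFinset.2 (p.edges_subset_edgeSet he))
end
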